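/- A monoid M satisfying xy = xyx for all x, y satisfies φ(w) = φ(ini(w)) for every homomorphism φ from the free monoid to M and every word w. -/

import Mathlib

/-- `ini w` retains only the first occurrence of each letter of the word `w`. -/
def ini {X : Type*} [DecidableEq X] : List X → List X
  | [] => []
  | a :: l => a :: (ini l).filter (fun b => decide (b ≠ a))

/-!
In such a monoid every element is idempotent (take `y = 1`), and if `m * x = m` then also
`m * y * x = m * y * m * x = m * y`. So once a letter has been read, every later occurrence of it
is absorbed by the prefix, and deleting those occurrences does not change the product.
-/

section LeftRegular

variable {M : Type*} [Monoid M] (h : ∀ x y : M, x * y = x * y * x)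
include h

theorem mul_self_eq_self (x : M) : x * x = x := by
  simpa using (h x 1).symm

theorem mul_mul_eq_mul_of_mul_eq {m x : M} (hx : m * x = m) (y : M) :
    m * y * x = m * y := by
  rw [h m y, mul_assoc, hx]

theorem mul_prod_filter_eq_mul_prod {α : Type*} (f : α → M) (p : α → Bool) :
    ∀ (u : List α) (m : M), (∀ b, p b = false → m * f b = m) →
      m * ((u.filter p).map f).prod = m * (u.map f).prod
  | [], _, _ => rfl
  | b :: u, m, hm => by
    cases hb : p b
    · rw [List.filter_cons_of_neg (by simp [hb]), List.map_cons, List.prod_cons, ← mul_assoc,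
        hm b hb, mul_prod_filter_eq_mul_prod f p u m hm]
    · rw [List.filter_cons_of_pos hb]
      simp only [List.map_cons, List.prod_cons, ← mul_assoc]
      exact mul_prod_filter_eq_mul_prod f p u (m * f b)
        fun c hc => mul_mul_eq_mul_of_mul_eq h (hm c hc) (f b)

end LeftRegular

theorem stmt_9 {X M : Type*} [DecidableEq X] [Monoid M]
    (h : ∀ x y : M, x * y = x * y * x) (φ : X → M) (w : List X) :
    (w.map φ).prod = ((ini w).map φ).prod := by
  induction w with
  | nil => rfl
  | cons a l ih =>
    simp only [ini, List.map_cons, List.prod_cons, ih]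
    refine (mul_prod_filter_eq_mul_prod h φ _ (ini l) (φ a) fun b hb => ?_).symm
    obtain rfl : b = a := by simpa using hb
    exact mul_self_eq_self h (φ b)
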